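/- Let j ≥ 1 be an integer and ε′ = 1/(100(2j+1)). There is a constant C depending only on j such that for every dyadic M ≥ 1, the Lebesgue measure of the set of μ ∈ ℝ with |μ| ∼ M for which there exist nonzero integers k₁, k₂ with k = k₁ + k₂ nonzero and |μ − (k^{2j+1} − k₁^{2j+1} − k₂^{2j+1})| ≤ ⟨|k_min| |k_max|^{2j}⟩^{ε′} is at most C M^{(100j+1)/(50(2j+1))}. -/

import Mathlib

open MeasureTheory Real Set
open scoped ENNReal NNReal

noncomputable section

/-- Japanese bracket `⟨x⟩ = 1 + |x|`. -/
def jb (x : ℝ) : ℝ := 1 + |x|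

/-- `σ = τ + (−1)^j k^{2j+1}`. -/
def sgm (j : ℕ) (k : ℤ) (τ : ℝ) : ℝ := τ + (-1 : ℝ) ^ j * (k : ℝ) ^ (2 * j + 1)

/-- Fourier transform in the time variable. -/
def timeFT (f : ℝ → ℂ) (τ : ℝ) : ℂ :=
  ((1 / (2 * π) : ℝ) : ℂ) * ∫ t : ℝ, Complex.exp (-(Complex.I * (τ : ℂ) * (t : ℂ))) * f t

/-- Space–time Fourier transform of a `2π`-periodic function, which is represented through
its `x`-Fourier coefficients `u k t` (`k ∈ ℤ` the space frequency, `t` the time). -/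
def stFT (u : ℤ → ℝ → ℂ) (k : ℤ) (τ : ℝ) : ℂ := timeFT (u k) τ

/-- Bourgain norm `‖u‖_{X_{s,b}} = ‖⟨k⟩^s ⟨σ⟩^b 𝓕u(k,τ)‖_{L²_{k,τ}}`, counting measure on
`k ∈ ℤ∖{0}`, Lebesgue measure in `τ`. -/
def Xnorm (j : ℕ) (s b : ℝ) (u : ℤ → ℝ → ℂ) : ℝ≥0∞ :=
  (∑' k : {k : ℤ // k ≠ 0}, ∫⁻ τ : ℝ,
      (ENNReal.ofReal (jb (k.1 : ℝ) ^ s * jb (sgm j k.1 τ) ^ b) * ‖stFT u k.1 τ‖₊) ^ 2) ^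
    (1 / 2 : ℝ)

/-- The quantity `‖⟨k⟩^s ⟨σ⟩^b 𝓕u(k,τ)‖_{L²_k L¹_τ}`. -/
def L2L1w (j : ℕ) (s b : ℝ) (u : ℤ → ℝ → ℂ) : ℝ≥0∞ :=
  (∑' k : {k : ℤ // k ≠ 0},
      (∫⁻ τ : ℝ, ENNReal.ofReal (jb (k.1 : ℝ) ^ s * jb (sgm j k.1 τ) ^ b) * ‖stFT u k.1 τ‖₊) ^ 2) ^
    (1 / 2 : ℝ)

/-- `‖u‖_{Y_s} = ‖u‖_{X_{s,1/2}} + ‖⟨k⟩^s 𝓕u(k,τ)‖_{L²_k L¹_τ}`. -/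
def Ynorm (j : ℕ) (s : ℝ) (u : ℤ → ℝ → ℂ) : ℝ≥0∞ :=
  Xnorm j s (1 / 2) u + L2L1w j s 0 u

/-- `‖u‖_{Z_s} = ‖u‖_{X_{s,−1/2}} + ‖⟨k⟩^s ⟨σ⟩^{−1/2} 𝓕u(k,τ)‖_{L²_k L¹_τ}`. -/
def Znorm (j : ℕ) (s : ℝ) (u : ℤ → ℝ → ℂ) : ℝ≥0∞ :=
  Xnorm j s (-(1 / 2)) u + L2L1w j s (-(1 / 2)) u

/-- `v` is an extension of `u` beyond the time interval `[0,δ]`. -/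
def agreeOn (δ : ℝ) (v u : ℤ → ℝ → ℂ) : Prop :=
  ∀ k : ℤ, ∀ t ∈ Icc (0 : ℝ) δ, v k t = u k t

/-- Restriction norm `‖u‖_{X_{s,b}^δ} = inf {‖v‖_{X_{s,b}} : v = u on [0,δ]}`. -/
def XnormR (j : ℕ) (s b δ : ℝ) (u : ℤ → ℝ → ℂ) : ℝ≥0∞ :=
  ⨅ (v : ℤ → ℝ → ℂ) (_ : agreeOn δ v u), Xnorm j s b v

/-- Restriction norm `‖u‖_{Y_s^δ} = inf {‖v‖_{Y_s} : v = u on [0,δ]}`. -/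
def YnormR (j : ℕ) (s δ : ℝ) (u : ℤ → ℝ → ℂ) : ℝ≥0∞ :=
  ⨅ (v : ℤ → ℝ → ℂ) (_ : agreeOn δ v u), Ynorm j s v

/-- Sobolev norm `‖φ‖_{H^s} = ‖⟨k⟩^s 𝓕ₓφ(k)‖_{L²_k}` of a `2π`-periodic function given through its
Fourier coefficients `φ : ℤ → ℂ`. -/
def HsN (s : ℝ) (φ : ℤ → ℂ) : ℝ≥0∞ :=
  (∑' k : ℤ, (ENNReal.ofReal (jb (k : ℝ) ^ s) * ‖φ k‖₊) ^ 2) ^ (1 / 2 : ℝ)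

/-- The physical-space function attached to the `x`-Fourier coefficients `u k t`. -/
def phys (u : ℤ → ℝ → ℂ) (x t : ℝ) : ℂ :=
  ∑' k : ℤ, Complex.exp (Complex.I * (k : ℂ) * (x : ℂ)) * u k t

/-- `L^p` norm on `T × ℝ` (one period in `x`, all of time). -/
def LpXT (p : ℝ) (u : ℤ → ℝ → ℂ) : ℝ≥0∞ :=
  (∫⁻ t : ℝ, ∫⁻ x in Ioc (0 : ℝ) (2 * π), (‖phys u x t‖₊ : ℝ≥0∞) ^ p) ^ (1 / p)

/-- Convolution in the space frequency: the Fourier coefficients of the product of two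
`2π`-periodic functions. -/
def convK (u v : ℤ → ℝ → ℂ) (k : ℤ) (t : ℝ) : ℂ := ∑' k₁ : ℤ, u k₁ t * v (k - k₁) t

/-- Fourier coefficients of `∂ₓ u`. -/
def dX (u : ℤ → ℝ → ℂ) (k : ℤ) (t : ℝ) : ℂ := Complex.I * (k : ℂ) * u k t

/-- Fourier coefficients of the nonlinearity
`½∂ₓ(u²) + ∂ₓ(1−∂ₓ²)⁻¹[u² + ½u_x²]`. -/
def nonlin (u : ℤ → ℝ → ℂ) (k : ℤ) (t : ℝ) : ℂ :=
  (Complex.I * (k : ℂ) / 2) * convK u u k t +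
    (Complex.I * (k : ℂ) / (1 + (k : ℂ) ^ 2)) *
      (convK u u k t + (1 / 2 : ℂ) * convK (dX u) (dX u) k t)

/-- `u` is a zero-`x`-mean solution of the higher-order shallow water equation
`u_t + ∂ₓ^{2j+1}u + ½∂ₓ(u²) + ∂ₓ(1−∂ₓ²)⁻¹[u² + ½u_x²] = 0` on the time set `I`,
formulated on the `x`-Fourier side. -/
def solvesOn (j : ℕ) (u : ℤ → ℝ → ℂ) (I : Set ℝ) : Prop :=
  (∀ t : ℝ, u 0 t = 0) ∧
    ∀ k : ℤ, ∀ t ∈ I,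
      HasDerivAt (u k)
        (-(Complex.I * (-1 : ℂ) ^ j * (k : ℂ) ^ (2 * j + 1) * u k t + nonlin u k t)) t

/-- `t ↦ u(·,t)` is continuous with values in `H^s` on the time set `I`. -/
def HsContOn (s : ℝ) (u : ℤ → ℝ → ℂ) (I : Set ℝ) : Prop :=
  ∀ t₀ ∈ I, Filter.Tendsto (fun t => HsN s (fun k => u k t - u k t₀))
    (nhdsWithin t₀ I) (nhds 0)

/-- `η` is a smooth cutoff supported in `[−1,2]` and equal to `1` on `[0,1]`. -/
structure IsCutoff (η : ℝ → ℝ) : Prop where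
  smooth : ContDiff ℝ (⊤ : ℕ∞) η
  supp : ∀ t : ℝ, t ∉ Icc (-1 : ℝ) 2 → η t = 0
  one : ∀ t ∈ Icc (0 : ℝ) 1, η t = 1

/-- `L²` norm on `(ℤ∖{0}) × ℝ`. -/
def L2nz (F : ℤ → ℝ → ℂ) : ℝ≥0∞ :=
  (∑' k : {k : ℤ // k ≠ 0}, ∫⁻ τ : ℝ, (‖F k.1 τ‖₊ : ℝ≥0∞) ^ 2) ^ (1 / 2 : ℝ)

/-- `L²_k L¹_τ` norm on `(ℤ∖{0}) × ℝ`. -/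
def L2L1nz (F : ℤ → ℝ → ℂ) : ℝ≥0∞ :=
  (∑' k : {k : ℤ // k ≠ 0}, (∫⁻ τ : ℝ, (‖F k.1 τ‖₊ : ℝ≥0∞)) ^ 2) ^ (1 / 2 : ℝ)

end

/-!
Up to a common sign the three frequencies `k₁, k₂, k = k₁ + k₂` are `a, b, a + b` with `a, b ≥ 0`,
and since `2j + 1` is odd the resonance is `±((a + b)^{2j+1} - a^{2j+1} - b^{2j+1})`. Expanding
`(a + b)^{2j+1} ≥ (a^{2j} + b^{2j})(a + b)` gives `|k_min| |k_max|^{2j} ≤ 4^j |resonance|`.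
So if `|μ| ∼ M` lies near the resonance of `(k₁, k₂)`, then `|k_min| |k_max|^{2j} ≲ M` and the
window is `≲ M^{ε′}`. The pairs with `|k_min| |k_max|^{2j} ≤ Q` number
`≲ ∑_{a ≤ Q^{1/(2j+1)}} (Q/a)^{1/(2j)} ≲ Q^{2/(2j+1)}`, so the set is covered by
`≲ M^{2/(2j+1)}` intervals of length `≲ M^{ε′}`, and `2/(2j+1) + ε′ ≤ (100j+1)/(50(2j+1))`
because `j ≥ 1`.
-/

open scoped Finset

section PowerSum

variable {R : Type*} [CommRing R] [LinearOrder R] [IsStrictOrderedRing R] {a b : R} {n : ℕ}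

theorem min_mul_max_pow_le_add_pow_sub (ha : 0 ≤ a) (hb : 0 ≤ b) (hn : n ≠ 0) :
    min a b * max a b ^ n ≤ (a + b) ^ (n + 1) - a ^ (n + 1) - b ^ (n + 1) := by
  have hsum : (a ^ n + b ^ n) * (a + b) ≤ (a + b) ^ (n + 1) := by
    rw [pow_succ]; exact mul_le_mul_of_nonneg_right (pow_add_pow_le ha hb hn) (by positivity)
  have hcross : min a b * max a b ^ n ≤ a * b ^ n + a ^ n * b := by
    rcases le_total a b with hab | hab
    · rw [min_eq_left hab, max_eq_right hab]
      nlinarith [pow_nonneg ha n]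
    · rw [min_eq_right hab, max_eq_left hab]
      nlinarith [pow_nonneg hb n]
  linear_combination hcross + hsum

theorem min_mul_add_pow_le_two_pow_mul (ha : 0 ≤ a) (hb : 0 ≤ b) (hn : n ≠ 0) :
    min a b * (a + b) ^ n ≤ 2 ^ n * ((a + b) ^ (n + 1) - a ^ (n + 1) - b ^ (n + 1)) := by
  have hmax : (a + b) ^ n ≤ 2 ^ n * max a b ^ n := by
    rw [← mul_pow]
    exact pow_le_pow_left₀ (by positivity) (by linarith [le_max_left a b, le_max_right a b]) n
  calc min a b * (a + b) ^ n ≤ min a b * (2 ^ n * max a b ^ n) :=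
        mul_le_mul_of_nonneg_left hmax (le_min ha hb)
    _ = 2 ^ n * (min a b * max a b ^ n) := by ring
    _ ≤ _ := mul_le_mul_of_nonneg_left (min_mul_max_pow_le_add_pow_sub ha hb hn) (by positivity)

end PowerSum

def resonance (j : ℕ) (k₁ k₂ : ℤ) : ℤ :=
  (k₁ + k₂) ^ (2 * j + 1) - k₁ ^ (2 * j + 1) - k₂ ^ (2 * j + 1)

def kMin (k₁ k₂ : ℤ) : ℤ := min (min |k₁ + k₂| |k₁|) |k₂|

def kMax (k₁ k₂ : ℤ) : ℤ := max (max |k₁ + k₂| |k₁|) |k₂|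

theorem resonance_comm (j : ℕ) (k₁ k₂ : ℤ) : resonance j k₁ k₂ = resonance j k₂ k₁ := by
  unfold resonance; ring

theorem exists_resonance_eq (j : ℕ) (k₁ k₂ : ℤ) :
    ∃ a b : ℤ, 0 ≤ a ∧ 0 ≤ b ∧ kMin k₁ k₂ = min a b ∧ kMax k₁ k₂ = a + b ∧
      |resonance j k₁ k₂| = |resonance j a b| := by
  simp only [kMin, kMax, Int.abs_eq_natAbs (_ + _), Int.abs_eq_natAbs k₁, Int.abs_eq_natAbs k₂]
  wlog h : k₂ ≤ k₁ generalizing k₁ k₂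
  · obtain ⟨a, b, ha, hb, hmin, hmax, hres⟩ := this k₂ k₁ (by omega)
    exact ⟨a, b, ha, hb, by omega, by omega, by rw [resonance_comm, hres]⟩
  have hneg : ∀ x : ℤ, (-x) ^ (2 * j + 1) = -x ^ (2 * j + 1) := (odd_two_mul_add_one j).neg_pow
  rcases le_total 0 k₂ with h₂ | h₂
  · exact ⟨k₁, k₂, by omega, h₂, by omega, by omega, rfl⟩
  rcases le_total k₁ 0 with h₁ | h₁
  · refine ⟨-k₁, -k₂, by omega, by omega, by omega, by omega, ?_⟩
    rw [← abs_neg]; unfold resonance; rw [← neg_add, hneg, hneg, hneg]; ring_nf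
  rcases le_total 0 (k₁ + k₂) with hs | hs
  · refine ⟨k₁ + k₂, -k₂, hs, by omega, by omega, by omega, ?_⟩
    rw [← abs_neg]; unfold resonance; rw [add_neg_cancel_right, hneg]; ring_nf
  · refine ⟨k₁, -(k₁ + k₂), h₁, by omega, by omega, by omega, ?_⟩
    unfold resonance; rw [show k₁ + -(k₁ + k₂) = -k₂ by ring, hneg, hneg]; ring_nf

theorem kMin_mul_kMax_pow_le (j : ℕ) (hj : j ≠ 0) (k₁ k₂ : ℤ) :
    kMin k₁ k₂ * kMax k₁ k₂ ^ (2 * j) ≤ 4 ^ j * |resonance j k₁ k₂| := by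
  obtain ⟨a, b, ha, hb, hmin, hmax, hres⟩ := exists_resonance_eq j k₁ k₂
  have hnonneg : 0 ≤ resonance j a b :=
    (mul_nonneg (le_min ha hb) (pow_nonneg (le_max_of_le_left ha) _)).trans
      (min_mul_max_pow_le_add_pow_sub ha hb (by omega))
  rw [hmin, hmax, hres, abs_of_nonneg hnonneg, show (4 : ℤ) ^ j = 2 ^ (2 * j) by
    rw [pow_mul]; norm_num]
  exact min_mul_add_pow_le_two_pow_mul ha hb (by omega)

theorem cast_resonance (j : ℕ) (k₁ k₂ : ℤ) :
    (resonance j k₁ k₂ : ℝ) =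
      ((k₁ + k₂ : ℤ) : ℝ) ^ (2 * j + 1) - (k₁ : ℝ) ^ (2 * j + 1) - (k₂ : ℝ) ^ (2 * j + 1) := by
  simp only [resonance, Int.cast_sub, Int.cast_pow]

theorem cast_kMin (k₁ k₂ : ℤ) :
    (kMin k₁ k₂ : ℝ) = min (min |((k₁ + k₂ : ℤ) : ℝ)| |(k₁ : ℝ)|) |(k₂ : ℝ)| := by
  simp only [kMin, Int.cast_min, Int.cast_abs]

theorem cast_kMax (k₁ k₂ : ℤ) :
    (kMax k₁ k₂ : ℝ) = max (max |((k₁ + k₂ : ℤ) : ℝ)| |(k₁ : ℝ)|) |(k₂ : ℝ)| := by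
  simp only [kMax, Int.cast_max, Int.cast_abs]

theorem le_mul_of_abs_sub_le_one_add_rpow {P R μ K M ε : ℝ} (hP : 0 ≤ P) (hK : 0 ≤ K)
    (hM : 1 ≤ M) (hε : ε ≤ 1 / 2) (hPR : P ≤ K * |R|) (hμ : |μ| ≤ 4 * M)
    (hμR : |μ - R| ≤ (1 + P) ^ ε) : P ≤ 5 * K * (K + 1) * M := by
  set r := (1 + P) ^ ε
  have hr : 0 ≤ r := by positivity
  have hr_sq : r ^ 2 ≤ 1 + P := by
    rw [← Real.rpow_natCast, ← Real.rpow_mul (by positivity)]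
    exact (Real.rpow_le_rpow_of_exponent_le (by linarith) (by push_cast; linarith)).trans_eq
      (Real.rpow_one _)
  have hR : |R| ≤ 4 * M + r := by
    have := abs_sub_abs_le_abs_sub R μ
    rw [abs_sub_comm] at this
    linarith
  have hPr : P ≤ K * (4 * M + r) := hPR.trans (mul_le_mul_of_nonneg_left hR hK)
  have hKM : 0 ≤ K * M := by positivity
  have hr_le : r ≤ K + 1 + 4 * K * M := by
    by_contra! h
    have h1 : 1 ≤ r := by linarith
    nlinarith [mul_lt_mul_of_pos_left h (by linarith : 0 < r), mul_nonneg (sub_nonneg.2 h1) hKM]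
  nlinarith [mul_nonneg (mul_nonneg hK (by linarith : 0 ≤ K + 1)) (sub_nonneg.2 hM)]

theorem one_add_rpow_le_mul_rpow {P C M ε : ℝ} (hP : 0 ≤ P) (hC : 0 ≤ C) (hM : 1 ≤ M)
    (hε₀ : 0 ≤ ε) (hε₁ : ε ≤ 1) (hPM : P ≤ C * M) : (1 + P) ^ ε ≤ (1 + C) * M ^ ε :=
  calc (1 + P) ^ ε ≤ ((1 + C) * M) ^ ε := by gcongr; nlinarith
    _ = (1 + C) ^ ε * M ^ ε := Real.mul_rpow (by positivity) (by positivity)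
    _ ≤ (1 + C) * M ^ ε := by
      gcongr
      exact Real.rpow_le_self_of_one_le (by linarith) hε₁

theorem mul_rpow_neg_le_rpow_sub_rpow {θ x : ℝ} (hθ₀ : 0 ≤ θ) (hθ₁ : θ ≤ 1) (hx : 0 ≤ x) :
    (1 - θ) * (x + 1) ^ (-θ) ≤ (x + 1) ^ (1 - θ) - x ^ (1 - θ) := by
  have hx1 : 0 < x + 1 := by linarith
  have hinv : (x + 1)⁻¹ ≤ 1 := inv_le_one_of_one_le₀ (by linarith)
  have hbern := rpow_one_add_le_one_add_mul_self (s := -(x + 1)⁻¹) (by linarith)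
    (p := 1 - θ) (by linarith) (by linarith)
  have hx_eq : x = (x + 1) * (1 + -(x + 1)⁻¹) := by field_simp; ring
  have hsplit : (x + 1) ^ (1 - θ) = (x + 1) * (x + 1) ^ (-θ) := by
    rw [sub_eq_add_neg, Real.rpow_add hx1, Real.rpow_one]
  calc (1 - θ) * (x + 1) ^ (-θ)
      = (x + 1) ^ (1 - θ) - (x + 1) ^ (1 - θ) * (1 + (1 - θ) * -(x + 1)⁻¹) := by
        rw [hsplit]; field_simp; ring
    _ ≤ (x + 1) ^ (1 - θ) - (x + 1) ^ (1 - θ) * (1 + -(x + 1)⁻¹) ^ (1 - θ) := by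
        gcongr
    _ = (x + 1) ^ (1 - θ) - x ^ (1 - θ) := by
        rw [← Real.mul_rpow hx1.le (by linarith), ← hx_eq]

theorem sum_Icc_rpow_neg_le {θ : ℝ} (hθ₀ : 0 ≤ θ) (hθ₁ : θ < 1) (A : ℕ) :
    ∑ a ∈ Finset.Icc 1 A, (a : ℝ) ^ (-θ) ≤ (A : ℝ) ^ (1 - θ) / (1 - θ) := by
  induction A with
  | zero => simp [Real.zero_rpow (by linarith : 1 - θ ≠ 0)]
  | succ A ih =>
    rw [Finset.sum_Icc_succ_top (by omega), le_div_iff₀ (by linarith)]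
    rw [le_div_iff₀ (by linarith)] at ih
    have := mul_rpow_neg_le_rpow_sub_rpow hθ₀ hθ₁.le A.cast_nonneg
    push_cast
    nlinarith

theorem le_rpow_inv_of_pow_le {x y : ℝ} {n : ℕ} (hx : 0 ≤ x) (hy : 0 ≤ y) (hn : n ≠ 0)
    (h : x ^ n ≤ y) : x ≤ y ^ (n : ℝ)⁻¹ := by
  rwa [Real.le_rpow_inv_iff_of_pos hx hy (by positivity), Real.rpow_natCast]

noncomputable def pairsWithKMin (a : ℤ) (W : ℕ) : Finset (ℤ × ℤ) :=
  (Finset.Icc (-(W : ℤ)) W ×ˢ Finset.Icc (-(W : ℤ)) W).filter fun p => kMin p.1 p.2 = a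

/-- The pair is recovered from the frequency of size `a` (two signs), the position of that
frequency among `k₁, k₂, k₁ + k₂`, and one of the two other frequencies. -/
theorem card_pairsWithKMin_le (a : ℤ) (W : ℕ) : #(pairsWithKMin a W) ≤ 6 * (2 * W + 1) := by
  set B : Finset (ℤ × ℤ) := {-a, a} ×ˢ Finset.Icc (-(W : ℤ)) W
  have hB : #B ≤ 2 * (2 * W + 1) := by
    rw [Finset.card_product, Int.card_Icc]
    exact Nat.mul_le_mul (Finset.card_le_two) (by omega)
  have hsub : pairsWithKMin a W ⊆
      B ∪ B.image Prod.swap ∪ B.image fun p => (p.2, p.1 - p.2) := by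
    rintro ⟨k₁, k₂⟩ hk
    simp only [pairsWithKMin, kMin, Finset.mem_filter, Finset.mem_product, Finset.mem_Icc,
      Int.abs_eq_natAbs] at hk
    simp only [B, Finset.mem_union, Finset.mem_image, Finset.mem_product, Finset.mem_insert,
      Finset.mem_singleton, Finset.mem_Icc, Prod.exists, Prod.swap_prod_mk, Prod.mk.injEq]
    rcases (by omega : (k₁.natAbs : ℤ) = a ∨ (k₂.natAbs : ℤ) = a ∨ ((k₁ + k₂).natAbs : ℤ) = a)
      with h | h | h
    · exact Or.inl (Or.inl (by omega))
    · exact Or.inl (Or.inr ⟨k₂, k₁, by omega, rfl, rfl⟩)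
    · exact Or.inr ⟨k₁ + k₂, k₁, by omega, rfl, by ring⟩
  calc #(pairsWithKMin a W) ≤ #B + #B + #B := by
        refine (Finset.card_le_card hsub).trans ?_
        refine (Finset.card_union_le _ _).trans (add_le_add ?_ Finset.card_image_le)
        exact (Finset.card_union_le _ _).trans (add_le_add le_rfl Finset.card_image_le)
    _ ≤ 6 * (2 * W + 1) := by omega

/-- Contains every pair with nonzero `k₁, k₂, k₁ + k₂` and `kMin * kMax ^ (2j) ≤ Q`: such a
pair has `a := kMin ≥ 1`, `a ^ (2j+1) ≤ Q` and `kMax ^ (2j) ≤ Q / a`. -/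
noncomputable def resonantPairs (j : ℕ) (Q : ℝ) : Finset (ℤ × ℤ) :=
  (Finset.Icc 1 ⌊Q ^ ((2 * j + 1 : ℕ) : ℝ)⁻¹⌋₊).biUnion fun a =>
    pairsWithKMin a ⌊(Q / a) ^ ((2 * j : ℕ) : ℝ)⁻¹⌋₊

theorem mem_resonantPairs {j : ℕ} (hj : j ≠ 0) {k₁ k₂ : ℤ} (h₁ : k₁ ≠ 0) (h₂ : k₂ ≠ 0)
    (h : k₁ + k₂ ≠ 0) {Q : ℝ} (hQ : (kMin k₁ k₂ : ℝ) * (kMax k₁ k₂ : ℝ) ^ (2 * j) ≤ Q) :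
    (k₁, k₂) ∈ resonantPairs j Q := by
  have hmin : 1 ≤ kMin k₁ k₂ := by simp only [kMin, Int.abs_eq_natAbs]; omega
  have hle : kMin k₁ k₂ ≤ kMax k₁ k₂ := by simp only [kMin, kMax, Int.abs_eq_natAbs]; omega
  set a := (kMin k₁ k₂).toNat
  have ha : (a : ℤ) = kMin k₁ k₂ := Int.toNat_of_nonneg (by omega)
  have ha_real : (a : ℝ) = kMin k₁ k₂ := by exact_mod_cast ha
  have ha_one : (1 : ℝ) ≤ a := by exact_mod_cast (by omega : 1 ≤ a)
  have hle_real : (a : ℝ) ≤ kMax k₁ k₂ := by rw [ha_real]; exact_mod_cast hle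
  rw [← ha_real] at hQ
  have hQ₀ : 0 ≤ Q := le_trans (mul_nonneg (by linarith) (pow_nonneg (by linarith) _)) hQ
  have hmaxQ : (kMax k₁ k₂ : ℝ) ^ (2 * j) ≤ Q / a := by
    rw [le_div_iff₀ (by linarith)]; linarith
  simp only [resonantPairs, Finset.mem_biUnion, Finset.mem_Icc]
  refine ⟨a, ⟨by omega, Nat.le_floor (le_rpow_inv_of_pow_le (by positivity) hQ₀ (by omega) ?_)⟩, ?_⟩
  · calc (a : ℝ) ^ (2 * j + 1) = a * a ^ (2 * j) := by ring
      _ ≤ a * (kMax k₁ k₂ : ℝ) ^ (2 * j) := by gcongr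
      _ ≤ Q := hQ
  have hmax : kMax k₁ k₂ ≤ (⌊(Q / a) ^ ((2 * j : ℕ) : ℝ)⁻¹⌋₊ : ℤ) := by
    rw [Int.natCast_floor_eq_floor (by positivity), Int.le_floor]
    exact le_rpow_inv_of_pow_le (by linarith) (by positivity) (by omega) hmaxQ
  have hk₁ : |k₁| ≤ kMax k₁ k₂ := (le_max_right _ _).trans (le_max_left _ _)
  have hk₂ : |k₂| ≤ kMax k₁ k₂ := le_max_right _ _
  simp only [pairsWithKMin, Finset.mem_filter, Finset.mem_product, Finset.mem_Icc]
  exact ⟨⟨abs_le.mp (hk₁.trans hmax), abs_le.mp (hk₂.trans hmax)⟩, ha.symm⟩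

theorem sum_Icc_div_rpow_le {j : ℕ} (hj : j ≠ 0) {Q : ℝ} (hQ : 1 ≤ Q) :
    ∑ a ∈ Finset.Icc 1 ⌊Q ^ ((2 * j + 1 : ℕ) : ℝ)⁻¹⌋₊, (Q / a) ^ ((2 * j : ℕ) : ℝ)⁻¹ ≤
      2 * Q ^ (2 / (2 * j + 1 : ℝ)) := by
  set θ : ℝ := ((2 * j : ℕ) : ℝ)⁻¹
  set e : ℝ := ((2 * j + 1 : ℕ) : ℝ)⁻¹
  set A := ⌊Q ^ e⌋₊
  have hj' : (1 : ℝ) ≤ j := by exact_mod_cast Nat.one_le_iff_ne_zero.mpr hj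
  have hθ₀ : 0 ≤ θ := by positivity
  have hθ : θ ≤ 1 / 2 := by
    simp only [θ]; push_cast; rw [inv_le_comm₀ (by positivity) (by norm_num)]; linarith
  have hexp : θ + e * (1 - θ) = 2 / (2 * j + 1 : ℝ) := by
    simp only [θ, e]; push_cast; field_simp; ring
  have hA : (A : ℝ) ^ (1 - θ) ≤ (Q ^ e) ^ (1 - θ) :=
    Real.rpow_le_rpow (by positivity) (Nat.floor_le (by positivity)) (by linarith)
  calc ∑ a ∈ Finset.Icc 1 A, (Q / a) ^ θ = Q ^ θ * ∑ a ∈ Finset.Icc 1 A, (a : ℝ) ^ (-θ) := by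
        rw [Finset.mul_sum]
        refine Finset.sum_congr rfl fun a _ => ?_
        rw [Real.div_rpow (by linarith) a.cast_nonneg, Real.rpow_neg a.cast_nonneg, div_eq_mul_inv]
    _ ≤ Q ^ θ * ((A : ℝ) ^ (1 - θ) / (1 - θ)) := by
        gcongr; exact sum_Icc_rpow_neg_le hθ₀ (by linarith) A
    _ ≤ Q ^ θ * (2 * (Q ^ e) ^ (1 - θ)) := by
        gcongr
        rw [div_le_iff₀ (by linarith)]
        nlinarith [Real.rpow_nonneg (Nat.cast_nonneg A : (0 : ℝ) ≤ A) (1 - θ)]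
    _ = 2 * Q ^ (2 / (2 * j + 1 : ℝ)) := by
        rw [← Real.rpow_mul (by linarith), mul_left_comm, ← Real.rpow_add (by linarith), hexp]

theorem card_resonantPairs_le {j : ℕ} (hj : j ≠ 0) {Q : ℝ} (hQ : 1 ≤ Q) :
    (#(resonantPairs j Q) : ℝ) ≤ 30 * Q ^ (2 / (2 * j + 1 : ℝ)) := by
  set A := ⌊Q ^ ((2 * j + 1 : ℕ) : ℝ)⁻¹⌋₊
  set W : ℕ → ℕ := fun a => ⌊(Q / a) ^ ((2 * j : ℕ) : ℝ)⁻¹⌋₊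
  have hcard : #(resonantPairs j Q) ≤ ∑ a ∈ Finset.Icc 1 A, 6 * (2 * W a + 1) :=
    Finset.card_biUnion_le.trans (Finset.sum_le_sum fun a _ => card_pairsWithKMin_le _ _)
  have hA : (A : ℝ) ≤ Q ^ (2 / (2 * j + 1 : ℝ)) := by
    refine (Nat.floor_le (by positivity)).trans (Real.rpow_le_rpow_of_exponent_le hQ ?_)
    push_cast
    rw [inv_eq_one_div]
    exact div_le_div_of_nonneg_right (by norm_num) (by positivity)
  calc (#(resonantPairs j Q) : ℝ) ≤ ∑ a ∈ Finset.Icc 1 A, (6 * (2 * W a + 1) : ℝ) := by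
        exact_mod_cast hcard
    _ ≤ ∑ a ∈ Finset.Icc 1 A, 6 * (2 * (Q / a) ^ ((2 * j : ℕ) : ℝ)⁻¹ + 1) := by
        gcongr with a
        exact Nat.floor_le (by positivity)
    _ = 12 * ∑ a ∈ Finset.Icc 1 A, (Q / a) ^ ((2 * j : ℕ) : ℝ)⁻¹ + 6 * A := by
        simp only [mul_add, Finset.sum_add_distrib, Finset.mul_sum, Finset.sum_const,
          Nat.card_Icc, nsmul_eq_mul]
        push_cast
        ring_nf
    _ ≤ 30 * Q ^ (2 / (2 * j + 1 : ℝ)) := by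
        linarith [sum_Icc_div_rpow_le hj hQ]

theorem exists_mem_resonantPairs_abs_sub_le {j : ℕ} (hj : j ≠ 0) {ε M μ : ℝ} (hε₀ : 0 ≤ ε)
    (hε : ε ≤ 1 / 2) (hM : 1 ≤ M) (hμ : |μ| ≤ 4 * M) {k₁ k₂ : ℤ} (h₁ : k₁ ≠ 0) (h₂ : k₂ ≠ 0)
    (h : k₁ + k₂ ≠ 0)
    (hnear : |μ - resonance j k₁ k₂| ≤ jb (kMin k₁ k₂ * kMax k₁ k₂ ^ (2 * j)) ^ ε) :
    ∃ p ∈ resonantPairs j (5 * 4 ^ j * (4 ^ j + 1) * M),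
      |μ - resonance j p.1 p.2| ≤ (1 + 5 * 4 ^ j * (4 ^ j + 1)) * M ^ ε := by
  have hPR : (kMin k₁ k₂ : ℝ) * kMax k₁ k₂ ^ (2 * j) ≤ 4 ^ j * |(resonance j k₁ k₂ : ℝ)| := by
    exact_mod_cast kMin_mul_kMax_pow_le j hj k₁ k₂
  have hP : 0 ≤ (kMin k₁ k₂ : ℝ) * kMax k₁ k₂ ^ (2 * j) := by
    have : 0 ≤ kMin k₁ k₂ := le_min (le_min (abs_nonneg _) (abs_nonneg _)) (abs_nonneg _)
    have : 0 ≤ kMax k₁ k₂ := le_max_of_le_right (abs_nonneg _)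
    positivity
  rw [jb, abs_of_nonneg hP] at hnear
  have hPM := le_mul_of_abs_sub_le_one_add_rpow hP (by positivity) hM hε hPR hμ hnear
  exact ⟨(k₁, k₂), mem_resonantPairs hj h₁ h₂ h hPM,
    hnear.trans (one_add_rpow_le_mul_rpow hP (by positivity) hM hε₀ (by linarith) hPM)⟩

theorem volume_le_of_forall_exists_abs_sub_le {ι : Type*} (s : Finset ι) (c : ι → ℝ) {ρ : ℝ}
    {S : Set ℝ} (hS : ∀ μ ∈ S, ∃ i ∈ s, |μ - c i| ≤ ρ) :
    volume S ≤ ENNReal.ofReal (#s * (2 * ρ)) :=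
  calc volume S ≤ volume (⋃ i ∈ s, Metric.closedBall (c i) ρ) := measure_mono fun μ hμ => by
        obtain ⟨i, hi, hμi⟩ := hS μ hμ
        exact Set.mem_biUnion hi (by rwa [Metric.mem_closedBall, Real.dist_eq])
    _ ≤ ∑ i ∈ s, volume (Metric.closedBall (c i) ρ) := measure_biUnion_finset_le _ _
    _ = ENNReal.ofReal (#s * (2 * ρ)) := by
        rw [Finset.sum_congr rfl fun i _ => Real.volume_closedBall _ _, Finset.sum_const,
          nsmul_eq_mul, ← ENNReal.ofReal_natCast, ← ENNReal.ofReal_mul (by positivity)]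

theorem rpow_two_div_mul_rpow_le {j : ℕ} (hj : 1 ≤ j) {M : ℝ} (hM : 1 ≤ M) :
    M ^ (2 / (2 * j + 1 : ℝ)) * M ^ (1 / (100 * (2 * (j : ℝ) + 1))) ≤
      M ^ ((100 * (j : ℝ) + 1) / (50 * (2 * (j : ℝ) + 1))) := by
  have hj' : (1 : ℝ) ≤ j := by exact_mod_cast hj
  rw [← Real.rpow_add (by linarith)]
  refine Real.rpow_le_rpow_of_exponent_le hM ?_
  rw [show 2 / (2 * j + 1 : ℝ) + 1 / (100 * (2 * j + 1)) = 201 / (100 * (2 * j + 1)) by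
      field_simp; ring,
    show (100 * j + 1 : ℝ) / (50 * (2 * j + 1)) = (200 * j + 2) / (100 * (2 * j + 1)) by
      field_simp; ring]
  gcongr
  linarith

theorem card_resonantPairs_mul_le {j : ℕ} (hj : 1 ≤ j) {C M : ℝ} (hC : 1 ≤ C) (hM : 1 ≤ M) :
    (#(resonantPairs j (C * M)) : ℝ) * (2 * ((1 + C) * M ^ (1 / (100 * (2 * (j : ℝ) + 1))))) ≤
      60 * C * (1 + C) * M ^ ((100 * (j : ℝ) + 1) / (50 * (2 * (j : ℝ) + 1))) := by
  have hj' : (1 : ℝ) ≤ j := by exact_mod_cast hj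
  have hCM : (C * M) ^ (2 / (2 * j + 1 : ℝ)) ≤ C * M ^ (2 / (2 * j + 1 : ℝ)) := by
    rw [Real.mul_rpow (by linarith) (by linarith)]
    gcongr
    exact Real.rpow_le_self_of_one_le hC (by rw [div_le_one (by positivity)]; linarith)
  calc (#(resonantPairs j (C * M)) : ℝ) * (2 * ((1 + C) * M ^ (1 / (100 * (2 * (j : ℝ) + 1)))))
      ≤ 30 * (C * M) ^ (2 / (2 * j + 1 : ℝ)) *
          (2 * ((1 + C) * M ^ (1 / (100 * (2 * (j : ℝ) + 1))))) := by
        gcongr; exact card_resonantPairs_le (by omega) (by nlinarith)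
    _ ≤ 30 * (C * M ^ (2 / (2 * j + 1 : ℝ))) *
          (2 * ((1 + C) * M ^ (1 / (100 * (2 * (j : ℝ) + 1))))) := by gcongr
    _ = 60 * C * (1 + C) *
          (M ^ (2 / (2 * j + 1 : ℝ)) * M ^ (1 / (100 * (2 * (j : ℝ) + 1)))) := by ring
    _ ≤ _ := by gcongr; exact rpow_two_div_mul_rpow_le hj hM

/-- Lemma 2.5: for dyadic `M ≥ 1`, the measure of the set of `μ` with
`|μ| ∼ M` lying within `⟨|k_min||k_max|^{2j}⟩^{ε′}` of some resonance value
`k^{2j+1} − k₁^{2j+1} − k₂^{2j+1}` is at most `C M^{(100j+1)/(50(2j+1))}`,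
where `ε′ = 1/(100(2j+1))`. -/
theorem stmt6 (j : ℕ) (hj : 1 ≤ j) :
    ∃ C : ℝ, 0 < C ∧
      ∀ M : ℝ, 1 ≤ M → (∃ n : ℕ, M = 2 ^ n) →
        volume {μ : ℝ | (M ≤ |μ| ∧ |μ| ≤ 4 * M) ∧
            ∃ k₁ k₂ : ℤ, k₁ ≠ 0 ∧ k₂ ≠ 0 ∧ k₁ + k₂ ≠ 0 ∧
              |μ - (((k₁ + k₂ : ℤ) : ℝ) ^ (2 * j + 1) - (k₁ : ℝ) ^ (2 * j + 1) -
                  (k₂ : ℝ) ^ (2 * j + 1))| ≤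
                jb ((min (min |((k₁ + k₂ : ℤ) : ℝ)| |(k₁ : ℝ)|) |(k₂ : ℝ)|) *
                      (max (max |((k₁ + k₂ : ℤ) : ℝ)| |(k₁ : ℝ)|) |(k₂ : ℝ)|) ^ (2 * j)) ^
                  (1 / (100 * (2 * (j : ℝ) + 1)))} ≤
          ENNReal.ofReal (C * M ^ ((100 * (j : ℝ) + 1) / (50 * (2 * (j : ℝ) + 1)))) := by
  have hj₀ : j ≠ 0 := by omega
  set C : ℝ := 5 * 4 ^ j * (4 ^ j + 1)
  have hC : 1 ≤ C := by
    have : (1 : ℝ) ≤ 4 ^ j := one_le_pow₀ (by norm_num)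
    nlinarith
  refine ⟨60 * C * (1 + C), by positivity, fun M hM _ => ?_⟩
  have hε : 1 / (100 * (2 * (j : ℝ) + 1)) ≤ 1 / 2 := by
    have : (1 : ℝ) ≤ j := by exact_mod_cast hj
    gcongr
    linarith
  refine le_trans ?_ (ENNReal.ofReal_le_ofReal (card_resonantPairs_mul_le hj hC hM))
  refine volume_le_of_forall_exists_abs_sub_le _ (fun p => (resonance j p.1 p.2 : ℝ)) ?_
  rintro μ ⟨⟨-, hμ⟩, k₁, k₂, h₁, h₂, h, hnear⟩
  rw [← cast_resonance, ← cast_kMin, ← cast_kMax] at hnear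
  exact exists_mem_resonantPairs_abs_sub_le hj₀ (by positivity) hε hM hμ h₁ h₂ h hnear
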